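/- arXiv:1901.09228 — 3 statements merged into one kernel-verified Lean document; each statement's English description precedes it below -/
import Mathlib

section
/- Let m be a positive integer and let k, d be integers with 0 ≤ k ≤ m/2 and 0 < d ≤ m. Then (3^k+1)·3^d ≡ 3^k+1 (mod 3^m - 1) if and only if d = m, or (m is even and d = k = m/2). -/
/-!
Multiplication by `b` modulo `b ^ m - 1` rotates the `m` base-`b` digits cyclically, so
`(b ^ k + 1) * b ^ d` reduces to `b ^ ((k + d) % m) + b ^ d`. For `b ≥ 3` both this and
`b ^ k + 1` lie below `b ^ m - 1`, so the congruence is an equality of two sums of two powers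
of `b`, which forces `(k + d) % m = 0` and `d = k`.
-/

namespace Nat

variable {b m : ℕ}

theorem pow_modEq_one_of_pos (hb : 0 < b) (m : ℕ) : b ^ m ≡ 1 [MOD b ^ m - 1] :=
  modEq_sub (one_le_pow m b hb)

theorem pow_modEq_pow_mod (hb : 0 < b) (m n : ℕ) : b ^ n ≡ b ^ (n % m) [MOD b ^ m - 1] :=
  calc b ^ n = (b ^ m) ^ (n / m) * b ^ (n % m) := by rw [← pow_mul, ← pow_add, div_add_mod]
    _ ≡ 1 ^ (n / m) * b ^ (n % m) [MOD b ^ m - 1] :=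
      ((pow_modEq_one_of_pos hb m).pow _).mul_right _
    _ = b ^ (n % m) := by rw [one_pow, one_mul]

theorem pow_add_pow_lt_pow_sub_one (hb : 3 ≤ b) (hm : 2 ≤ m) {x y : ℕ} (hx : x < m)
    (hy : y < m) : b ^ x + b ^ y < b ^ m - 1 := by
  have hx' : b ^ x ≤ b ^ (m - 1) := Nat.pow_le_pow_right (by omega) (by omega)
  have hy' : b ^ y ≤ b ^ (m - 1) := Nat.pow_le_pow_right (by omega) (by omega)
  have hbm : b ^ m = b * b ^ (m - 1) := by rw [← pow_succ']; congr 1; omega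
  have : b ≤ b ^ (m - 1) := le_self_pow (by omega) b
  have : 3 * b ^ (m - 1) ≤ b * b ^ (m - 1) := Nat.mul_le_mul_right _ hb
  omega

theorem eq_zero_and_eq_of_pow_add_pow_eq_pow_add_one (hb : 2 ≤ b) {s d k : ℕ} (hd : 0 < d)
    (h : b ^ s + b ^ d = b ^ k + 1) : s = 0 ∧ d = k := by
  obtain rfl | hs := Nat.eq_zero_or_pos s
  · exact ⟨rfl, Nat.pow_right_injective hb (by simpa [add_comm] using h)⟩
  obtain rfl | hk := Nat.eq_zero_or_pos k
  · have : b ≤ b ^ d := le_self_pow hd.ne' b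
    have : b ≤ b ^ s := le_self_pow hs.ne' b
    rw [pow_zero] at h
    omega
  have : b ∣ b ^ k + 1 := h ▸ dvd_add (dvd_pow_self b hs.ne') (dvd_pow_self b hd.ne')
  have : b ≤ 1 := le_of_dvd one_pos ((Nat.dvd_add_right (dvd_pow_self b hk.ne')).mp this)
  omega

theorem eq_of_pow_add_one_mul_pow_modEq (hb : 3 ≤ b) {k d : ℕ} (hk : k < m) (hd0 : 0 < d)
    (hdm : d < m) (h : (b ^ k + 1) * b ^ d ≡ b ^ k + 1 [MOD b ^ m - 1]) :
    m = k + k ∧ d = k := by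
  have hrot : (b ^ k + 1) * b ^ d ≡ b ^ ((k + d) % m) + b ^ d [MOD b ^ m - 1] := by
    rw [add_mul, ← pow_add, one_mul]
    exact (pow_modEq_pow_mod (by omega) m _).add_right _
  have hrhs_lt : b ^ k + 1 < b ^ m - 1 := by
    simpa using pow_add_pow_lt_pow_sub_one (y := 0) hb (by omega) hk (by omega)
  have hsum : b ^ ((k + d) % m) + b ^ d = b ^ k + 1 :=
    (hrot.symm.trans h).eq_of_lt_of_lt
      (pow_add_pow_lt_pow_sub_one hb (by omega) (mod_lt _ (by omega)) hdm) hrhs_lt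
  obtain ⟨hs, rfl⟩ := eq_zero_and_eq_of_pow_add_pow_eq_pow_add_one (by omega) hd0 hsum
  rcases lt_or_ge (d + d) m with hlt | hge
  · rw [mod_eq_of_lt hlt] at hs
    omega
  · rw [mod_eq_sub_mod hge, mod_eq_of_lt (by omega)] at hs
    omega

end Nat

theorem stmt_0_general (m k d : ℕ) (hk : k ≤ m / 2) (hd0 : 0 < d) (hdm : d ≤ m) :
    (3 ^ k + 1) * 3 ^ d ≡ 3 ^ k + 1 [MOD 3 ^ m - 1] ↔
      d = m ∨ (Even m ∧ d = m / 2 ∧ k = m / 2) := by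
  constructor
  · intro h
    rcases hdm.eq_or_lt with rfl | hdm
    · exact Or.inl rfl
    obtain ⟨rfl, rfl⟩ := Nat.eq_of_pow_add_one_mul_pow_modEq le_rfl (by omega) hd0 hdm h
    exact Or.inr ⟨⟨d, rfl⟩, by omega, by omega⟩
  · rintro (rfl | ⟨⟨c, rfl⟩, rfl, rfl⟩)
    · simpa using ((Nat.pow_modEq_one_of_pos (by norm_num) d).mul_left (3 ^ k + 1))
    · rw [show (c + c) / 2 = c by omega, add_mul, one_mul, ← pow_add, add_comm (3 ^ c)]
      exact (Nat.pow_modEq_one_of_pos (b := 3) (by norm_num) _).add_right _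

theorem stmt_0 (m k d : ℕ) (hm : 0 < m) (hk : k ≤ m / 2) (hd0 : 0 < d) (hdm : d ≤ m) :
    (3 ^ k + 1) * 3 ^ d ≡ 3 ^ k + 1 [MOD 3 ^ m - 1] ↔
      d = m ∨ (Even m ∧ d = m / 2 ∧ k = m / 2) :=
  stmt_0_general m k d hk hd0 hdm
end

section
/- Let C be a linear code over GF(3) with minimum weight d, and let c, c' be codewords of C with the same support and with wt(c) = wt(c') = i where d ≤ i ≤ 2d - 1. Then c' = c or c' = -c. -/
/-- Hamming weight of a vector over `ZMod 3`. -/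
def hammingWt {n : ℕ} (c : Fin n → ZMod 3) : ℕ :=
  (Finset.univ.filter fun j => c j ≠ 0).card

theorem stmt_9 (n : ℕ) (C : Submodule (ZMod 3) (Fin n → ZMod 3)) (d i : ℕ)
    (hd_min : ∀ x ∈ C, x ≠ 0 → d ≤ hammingWt x)
    (hd_ex : ∃ x ∈ C, x ≠ 0 ∧ hammingWt x = d)
    (c c' : Fin n → ZMod 3) (hc : c ∈ C) (hc' : c' ∈ C)
    (hsupp : {j | c j ≠ 0} = {j | c' j ≠ 0})
    (hwt : hammingWt c = i) (hwt' : hammingWt c' = i)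
    (hi1 : d ≤ i) (hi2 : i ≤ 2 * d - 1) :
    c' = c ∨ c' = -c := by
  by_contra hcon
  push_neg at hcon
  obtain ⟨h1, h2⟩ := hcon
  -- d ≥ 1
  have hd1 : 1 ≤ d := by
    obtain ⟨x, hxC, hx0, hxw⟩ := hd_ex
    rw [← hxw]
    have : ∃ j, x j ≠ 0 := by
      by_contra h
      push_neg at h
      exact hx0 (funext h)
    obtain ⟨j, hj⟩ := this
    have : j ∈ Finset.univ.filter fun j => x j ≠ 0 := by simp [hj]
    exact Finset.card_pos.2 ⟨j, this⟩
  set a := c - c' with ha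
  set b := c + c' with hb
  have haC : a ∈ C := C.sub_mem hc hc'
  have hbC : b ∈ C := C.add_mem hc hc'
  have ha0 : a ≠ 0 := fun h => h1 (by ext j; have := congrFun h j; simp only [ha, Pi.sub_apply, Pi.zero_apply] at this; linear_combination -this)
  have hb0 : b ≠ 0 := fun h => h2 (by
    have := funext_iff.1 h
    ext j
    have := this j
    simp [ha, hb, sub_eq_zero, Pi.add_apply] at this ⊢
    linear_combination this)
  have hda : d ≤ hammingWt a := hd_min a haC ha0
  have hdb : d ≤ hammingWt b := hd_min b hbC hb0
  -- key: filter sets for a and b are disjoint subsets of that of c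
  have hsc : ∀ j, c j = 0 ↔ c' j = 0 := fun j =>
    not_iff_not.1 (Set.ext_iff.1 hsupp j)
  have hkey : hammingWt a + hammingWt b ≤ hammingWt c := by
    unfold hammingWt
    rw [← Finset.card_union_of_disjoint]
    · apply Finset.card_le_card
      intro j hj
      simp only [Finset.mem_union, Finset.mem_filter, Finset.mem_univ, true_and] at hj ⊢
      by_contra hcj
      have hcj' : c' j = 0 := (hsc j).1 hcj
      rcases hj with h | h <;> simp [ha, hb, hcj, hcj'] at h
    · rw [Finset.disjoint_filter]
      intro j _ hja hjb
      have hcj : c j ≠ 0 := fun hcj => by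
        have hcj' : c' j = 0 := (hsc j).1 hcj
        simp [ha, hcj, hcj'] at hja
      have hcj' : c' j ≠ 0 := fun h => hcj ((hsc j).2 h)
      simp only [ha, hb, Pi.sub_apply, Pi.add_apply] at hja hjb
      revert hja hjb hcj hcj'
      generalize c j = u; generalize c' j = v
      revert u v; decide
  rw [hwt] at hkey
  omega
end

section
/- Let P = {a^2 : a ∈ GF(3^m)*} be the set of nonzero squares in GF(3^m), m ≥ 2, and let B = {{a^2, b^2, (a+b)^2, (a-b)^2} : a, b ∈ GF(3^m)*, a ≠ ±b}. Then each block in B has exactly 4 elements, and (P, B) is a Steiner system S(2, 4, (3^m-1)/2). -/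
/-!
In characteristic 3 the block `{a², b², (a + b)², (a - b)²}` is symmetric in `a, b` and unchanged
when `b` is replaced by `-b` or by `a + b` (as `2a + b = -(a - b)`): it only depends on the
`𝔽₃`-span of `a` and `b`. Hence a block containing two distinct points `a²`, `b²` is the block of
`a` and `b`. The points are counted through the squaring map on `Kˣ`, whose fibres `{a, -a}` have
size 2.
-/

open Finset

section SquareBlock

variable {K : Type*} [Field K] [DecidableEq K]

def squareBlock (a b : K) : Finset K := {a ^ 2, b ^ 2, (a + b) ^ 2, (a - b) ^ 2}

lemma mem_squareBlock {x a b : K} :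
    x ∈ squareBlock a b ↔ x = a ^ 2 ∨ x = b ^ 2 ∨ x = (a + b) ^ 2 ∨ x = (a - b) ^ 2 := by
  simp only [squareBlock, mem_insert, mem_singleton]

lemma squareBlock_comm (a b : K) : squareBlock a b = squareBlock b a := by
  ext x
  simp only [mem_squareBlock, add_comm b a, ← neg_sub a b, neg_sq]
  tauto

lemma squareBlock_neg_right (a b : K) : squareBlock a (-b) = squareBlock a b := by
  ext x
  simp only [mem_squareBlock, neg_sq, ← sub_eq_add_neg, sub_neg_eq_add]
  tauto

lemma squareBlock_congr_right {a b b' : K} (h : b ^ 2 = b' ^ 2) :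
    squareBlock a b = squareBlock a b' := by
  rcases sq_eq_sq_iff_eq_or_eq_neg.mp h with rfl | rfl
  · rfl
  · exact squareBlock_neg_right a b'

lemma squareBlock_congr_left {a a' b : K} (h : a ^ 2 = a' ^ 2) :
    squareBlock a b = squareBlock a' b := by
  rw [squareBlock_comm, squareBlock_congr_right h, squareBlock_comm]

variable [CharP K 3]

lemma squareBlock_add_self_right (a b : K) : squareBlock a (a + b) = squareBlock a b := by
  have hadd : a + (a + b) = -(a - b) := by grind
  ext x
  simp only [mem_squareBlock, hadd, sub_add_cancel_left, neg_sq]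
  tauto

lemma squareBlock_sub_self_right (a b : K) : squareBlock a (a - b) = squareBlock a b := by
  rw [sub_eq_add_neg, squareBlock_add_self_right, squareBlock_neg_right]

lemma squareBlock_eq_of_mem {a b c : K} (hab : a ^ 2 ≠ b ^ 2) (hb : b ^ 2 ∈ squareBlock a c) :
    squareBlock a b = squareBlock a c := by
  rcases mem_squareBlock.mp hb with h | h | h | h
  · exact absurd h.symm hab
  · exact squareBlock_congr_right h
  · rw [squareBlock_congr_right h, squareBlock_add_self_right]
  · rw [squareBlock_congr_right h, squareBlock_sub_self_right]

lemma squareBlock_eq_of_mem_of_mem {a b c d : K} (hab : a ^ 2 ≠ b ^ 2)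
    (ha : a ^ 2 ∈ squareBlock c d) (hb : b ^ 2 ∈ squareBlock c d) :
    squareBlock a b = squareBlock c d := by
  obtain ⟨e, he⟩ : ∃ e, squareBlock c d = squareBlock a e := by
    by_cases hac : a ^ 2 = c ^ 2
    · exact ⟨d, squareBlock_congr_left hac.symm⟩
    · refine ⟨c, ?_⟩
      rw [squareBlock_comm a, squareBlock_eq_of_mem (Ne.symm hac) ha]
  rw [he] at hb ⊢
  exact squareBlock_eq_of_mem hab hb

lemma card_squareBlock {a b : K} (ha : a ≠ 0) (hb : b ≠ 0) (hab : a ≠ b) (hab' : a ≠ -b) :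
    #(squareBlock a b) = 4 := by
  have sq_ne {u v : K} (h : u ≠ v) (h' : u ≠ -v) : u ^ 2 ≠ v ^ 2 := by
    rw [Ne, sq_eq_sq_iff_eq_or_eq_neg]
    exact not_or.mpr ⟨h, h'⟩
  have h12 := sq_ne hab hab'
  have h13 := sq_ne (u := a) (v := a + b) (by grind) (by grind)
  have h14 := sq_ne (u := a) (v := a - b) (by grind) (by grind)
  have h23 := sq_ne (u := b) (v := a + b) (by grind) (by grind)
  have h24 := sq_ne (u := b) (v := a - b) (by grind) (by grind)
  have h34 := sq_ne (u := a + b) (v := a - b) (by grind) (by grind)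
  rw [squareBlock, card_insert_of_notMem (by simp [h12, h13, h14]),
    card_insert_of_notMem (by simp [h23, h24]), card_insert_of_notMem (by simp [h34]),
    card_singleton]

end SquareBlock

lemma natCard_nonzero_squares {K : Type*} [Field K] [Fintype K] (h2 : (2 : K) ≠ 0) :
    Nat.card {x : K // ∃ a : K, a ≠ 0 ∧ x = a ^ 2} = (Fintype.card K - 1) / 2 := by
  classical
  set nonzero : Finset K := univ.erase 0
  have hsquares : {x : K | ∃ a : K, a ≠ 0 ∧ x = a ^ 2} = nonzero.image (· ^ 2) := by
    ext x
    simp [nonzero, eq_comm]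
  have hfibre : ∀ y ∈ nonzero.image (· ^ 2), #{a ∈ nonzero | a ^ 2 = y} = 2 := by
    simp only [mem_image]
    rintro _ ⟨a, ha, rfl⟩
    have ha : a ≠ 0 := ne_of_mem_erase ha
    have hfib : {x ∈ nonzero | x ^ 2 = a ^ 2} = {a, -a} := by
      ext x
      simp only [nonzero, sq_eq_sq_iff_eq_or_eq_neg, mem_filter, mem_erase, mem_univ, and_true,
        mem_insert, mem_singleton, and_iff_right_iff_imp]
      grind
    rw [hfib, card_pair]
    grind
  have hcount : #nonzero = 2 * #(nonzero.image (· ^ 2)) := by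
    rw [card_eq_sum_card_image (· ^ 2) nonzero, sum_congr rfl hfibre, sum_const, smul_eq_mul,
      mul_comm]
  have hunits : #nonzero = Fintype.card K - 1 := by
    rw [card_erase_of_mem (mem_univ 0), Finset.card_univ]
  calc Nat.card {x : K // ∃ a : K, a ≠ 0 ∧ x = a ^ 2}
      = Nat.card (nonzero.image (· ^ 2) : Set K) := by rw [← hsquares]; rfl
    _ = (Fintype.card K - 1) / 2 := by rw [Nat.card_coe_set_eq, Set.ncard_coe_finset]; omega

theorem stmt_17_general (m : ℕ) (K : Type*) [Field K] [Fintype K] [DecidableEq K]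
    (hcard : Fintype.card K = 3 ^ m) :
    (∀ a b : K, a ≠ 0 → b ≠ 0 → a ≠ b → a ≠ -b →
      ({a ^ 2, b ^ 2, (a + b) ^ 2, (a - b) ^ 2} : Finset K).card = 4) ∧
    Nat.card {x : K // ∃ a : K, a ≠ 0 ∧ x = a ^ 2} = (3 ^ m - 1) / 2 ∧
    (∀ x y : K, (∃ a : K, a ≠ 0 ∧ x = a ^ 2) → (∃ a : K, a ≠ 0 ∧ y = a ^ 2) → x ≠ y →
      ∃! S : Finset K,
        (∃ a b : K, a ≠ 0 ∧ b ≠ 0 ∧ a ≠ b ∧ a ≠ -b ∧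
          S = {a ^ 2, b ^ 2, (a + b) ^ 2, (a - b) ^ 2}) ∧ x ∈ S ∧ y ∈ S) := by
  have : CharP K 3 := charP_of_card_eq_prime_pow hcard
  refine ⟨fun a b ha hb hab hab' => card_squareBlock ha hb hab hab', ?_, ?_⟩
  · rw [natCard_nonzero_squares (by grind), hcard]
  · rintro x y ⟨a, ha, rfl⟩ ⟨b, hb, rfl⟩ hxy
    have hab : a ≠ b := by rintro rfl; exact hxy rfl
    have hab' : a ≠ -b := by rintro rfl; exact hxy (neg_sq b)
    refine ⟨squareBlock a b, ⟨⟨a, b, ha, hb, hab, hab', rfl⟩, ?_, ?_⟩, ?_⟩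
    · simp [squareBlock]
    · simp [squareBlock]
    · rintro S ⟨⟨c, d, -, -, -, -, rfl⟩, hxS, hyS⟩
      exact (squareBlock_eq_of_mem_of_mem hxy hxS hyS).symm

theorem stmt_17 (m : ℕ) (hm : 2 ≤ m) (K : Type*) [Field K] [Fintype K] [DecidableEq K]
    (hcard : Fintype.card K = 3 ^ m) :
    (∀ a b : K, a ≠ 0 → b ≠ 0 → a ≠ b → a ≠ -b →
      ({a ^ 2, b ^ 2, (a + b) ^ 2, (a - b) ^ 2} : Finset K).card = 4) ∧
    Nat.card {x : K // ∃ a : K, a ≠ 0 ∧ x = a ^ 2} = (3 ^ m - 1) / 2 ∧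
    (∀ x y : K, (∃ a : K, a ≠ 0 ∧ x = a ^ 2) → (∃ a : K, a ≠ 0 ∧ y = a ^ 2) → x ≠ y →
      ∃! S : Finset K,
        (∃ a b : K, a ≠ 0 ∧ b ≠ 0 ∧ a ≠ b ∧ a ≠ -b ∧
          S = {a ^ 2, b ^ 2, (a + b) ^ 2, (a - b) ^ 2}) ∧ x ∈ S ∧ y ∈ S) :=
  stmt_17_general m K hcard
end
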